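/- arXiv:2003.12714 — 12 statements merged into one kernel-verified Lean document; each statement's English description precedes it below -/
import Mathlib

section
/- Let X be a real linear space, C a convex subset, h nonnegative on [0,1], and f : C → ℝ nonnegative and h-convex on C. Then for every fixed t ∈ [0,1], the function f_t : C × C → ℝ defined by f_t(x,y) = f(tx + (1-t)y) is h-convex on C × C. -/
theorem hconvex_pair_function
    {X : Type*} [AddCommGroup X] [Module ℝ X]
    (C : Set X) (hC : Convex ℝ C)
    (h : ℝ → ℝ) (hh : ∀ t ∈ Set.Icc (0:ℝ) 1, 0 ≤ h t)
    (f : X → ℝ) (hf : ∀ x ∈ C, 0 ≤ f x)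
    (hconv : ∀ x ∈ C, ∀ y ∈ C, ∀ s ∈ Set.Icc (0:ℝ) 1,
        f (s • x + (1 - s) • y) ≤ h s * f x + h (1 - s) * f y) :
    ∀ t ∈ Set.Icc (0:ℝ) 1, ∀ x ∈ C, ∀ y ∈ C, ∀ u ∈ C, ∀ v ∈ C,
      ∀ α ∈ Set.Icc (0:ℝ) 1,
        f (t • (α • x + (1 - α) • u) + (1 - t) • (α • y + (1 - α) • v)) ≤
          h α * f (t • x + (1 - t) • y) + h (1 - α) * f (t • u + (1 - t) • v) := by
  intro t ht x hx y hy u hu v hv α hα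
  have hp : t • x + (1 - t) • y ∈ C := hC hx hy ht.1 (by linarith [ht.2]) (by ring)
  have hq : t • u + (1 - t) • v ∈ C := hC hu hv ht.1 (by linarith [ht.2]) (by ring)
  have key := hconv _ hp _ hq α hα
  have : t • (α • x + (1 - α) • u) + (1 - t) • (α • y + (1 - α) • v)
      = α • (t • x + (1 - t) • y) + (1 - α) • (t • u + (1 - t) • v) := by
    simp only [smul_add, smul_smul]; ring_nf; abel
  rw [this]; exact key
end

section
/- Let C be a convex subset of a real linear space, h : (0,∞) → ℝ a strictly positive multiplicative function (h(xy) = h(x)h(y) for all x,y > 0), and f : C → ℝ nonnegative and h-convex on C. Then for all x, y ∈ C and s ≥ 0 with (1+s)x − sy ∈ C, one has f((1+s)x − sy) ≥ h(1+s)f(x) − h(s)f(y). -/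
/-!
Write `z = (1 + s) • x - s • y`. Then `x = t • z + (1 - t) • y` with `t = 1 / (1 + s)`, so
h-convexity bounds `f x` by `h t * f z + h (1 - t) * f y`. Multiplying by `h (1 + s)` and using
multiplicativity, `h (1 + s) * h t = 1` and `h (1 + s) * h (1 - t) = h s`, which rearranges to the
claim.
-/

section Multiplicative

variable {h : ℝ → ℝ} (hpos : ∀ t : ℝ, 0 < t → 0 < h t)
  (hmul : ∀ x y : ℝ, 0 < x → 0 < y → h (x * y) = h x * h y)

include hpos hmul in
lemma map_one_of_mul_pos : h 1 = 1 := by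
  have h11 : h 1 * h 1 = h 1 * 1 := by rw [← hmul 1 1 one_pos one_pos, mul_one, mul_one]
  exact mul_left_cancel₀ (hpos 1 one_pos).ne' h11

include hpos hmul in
lemma map_mul_map_inv_of_mul_pos {a : ℝ} (ha : 0 < a) : h a * h a⁻¹ = 1 := by
  rw [← hmul a a⁻¹ ha (inv_pos.mpr ha), mul_inv_cancel₀ ha.ne', map_one_of_mul_pos hpos hmul]

include hpos hmul in
/-- For `s = 0` this needs `h 1 = 1`, since `h 0` is unconstrained. -/
lemma map_one_add_mul_map_div_of_mul_pos {s : ℝ} (hs : 0 ≤ s) :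
    h (1 + s) * h (s / (1 + s)) = h s := by
  rcases hs.eq_or_lt with rfl | hs
  · rw [add_zero, zero_div, map_one_of_mul_pos hpos hmul, one_mul]
  · have h1s : 0 < 1 + s := by linarith
    rw [← hmul _ _ h1s (div_pos hs h1s), mul_div_cancel₀ _ h1s.ne']

end Multiplicative

lemma one_sub_inv_one_add {s : ℝ} (hs : 1 + s ≠ 0) : 1 - (1 + s)⁻¹ = s / (1 + s) := by
  field_simp
  ring

lemma inv_smul_one_add_smul_sub_add_div_smul {X : Type*} [AddCommGroup X] [Module ℝ X]
    {s : ℝ} (hs : 1 + s ≠ 0) (x y : X) :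
    (1 + s)⁻¹ • ((1 + s) • x - s • y) + (s / (1 + s)) • y = x := by
  rw [smul_sub, inv_smul_smul₀ hs, smul_smul, div_eq_inv_mul, sub_add_cancel]

theorem hconvex_mercer_type_lower_bound_general
    {X : Type*} [AddCommGroup X] [Module ℝ X]
    (C : Set X)
    (h : ℝ → ℝ) (hpos : ∀ t : ℝ, 0 < t → 0 < h t)
    (hmul : ∀ x y : ℝ, 0 < x → 0 < y → h (x * y) = h x * h y)
    (f : X → ℝ)
    (hconv : ∀ x ∈ C, ∀ y ∈ C, ∀ t ∈ Set.Icc (0:ℝ) 1,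
        f (t • x + (1 - t) • y) ≤ h t * f x + h (1 - t) * f y) :
    ∀ x ∈ C, ∀ y ∈ C, ∀ s : ℝ, 0 ≤ s → (1 + s) • x - s • y ∈ C →
      h (1 + s) * f x - h s * f y ≤ f ((1 + s) • x - s • y) := by
  intro x _ y hy s hs hz
  have h1s : 0 < 1 + s := by linarith
  have ht : (1 + s)⁻¹ ∈ Set.Icc (0:ℝ) 1 := ⟨by positivity, inv_le_one_of_one_le₀ (by linarith)⟩
  have hx := hconv _ hz y hy _ ht
  rw [one_sub_inv_one_add h1s.ne', inv_smul_one_add_smul_sub_add_div_smul h1s.ne'] at hx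
  have hx' := mul_le_mul_of_nonneg_left hx (hpos _ h1s).le
  rw [mul_add, ← mul_assoc, ← mul_assoc, map_mul_map_inv_of_mul_pos hpos hmul h1s,
    map_one_add_mul_map_div_of_mul_pos hpos hmul hs, one_mul] at hx'
  linarith

theorem hconvex_mercer_type_lower_bound
    {X : Type*} [AddCommGroup X] [Module ℝ X]
    (C : Set X) (hC : Convex ℝ C)
    (h : ℝ → ℝ) (hpos : ∀ t : ℝ, 0 < t → 0 < h t)
    (hmul : ∀ x y : ℝ, 0 < x → 0 < y → h (x * y) = h x * h y)
    (f : X → ℝ) (hf : ∀ x ∈ C, 0 ≤ f x)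
    (hconv : ∀ x ∈ C, ∀ y ∈ C, ∀ t ∈ Set.Icc (0:ℝ) 1,
        f (t • x + (1 - t) • y) ≤ h t * f x + h (1 - t) * f y) :
    ∀ x ∈ C, ∀ y ∈ C, ∀ s : ℝ, 0 ≤ s → (1 + s) • x - s • y ∈ C →
      h (1 + s) * f x - h s * f y ≤ f ((1 + s) • x - s • y) :=
  hconvex_mercer_type_lower_bound_general C h hpos hmul f hconv
end

section
/- Let C be a convex subset of a real linear space, h : (0,∞) → ℝ strictly positive and multiplicative, and f : C → ℝ nonnegative. If for all x, y ∈ C and s ≥ 0 with (1+s)x − sy ∈ C one has f((1+s)x − sy) ≥ h(1+s)f(x) − h(s)f(y), then f is h-convex on C. -/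
theorem hconvex_of_mercer_type_lower_bound
    {X : Type*} [AddCommGroup X] [Module ℝ X]
    (C : Set X) (hC : Convex ℝ C)
    (h : ℝ → ℝ) (hpos : ∀ t : ℝ, 0 < t → 0 < h t)
    (hmul : ∀ x y : ℝ, 0 < x → 0 < y → h (x * y) = h x * h y)
    (f : X → ℝ) (hf : ∀ x ∈ C, 0 ≤ f x)
    (hmercer : ∀ x ∈ C, ∀ y ∈ C, ∀ s : ℝ, 0 ≤ s → (1 + s) • x - s • y ∈ C →
      h (1 + s) * f x - h s * f y ≤ f ((1 + s) • x - s • y)) :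
    ∀ x ∈ C, ∀ y ∈ C, ∀ α β : ℝ, 0 < α → 0 < β → α + β = 1 →
      f (α • x + β • y) ≤ h α * f x + h β * f y := by
  intro x hx y hy α β hα hβ hαβ
  have h1 : h 1 = 1 := by
    have := hmul 1 1 one_pos one_pos
    have hp := hpos 1 one_pos
    rw [one_mul] at this
    nlinarith
  set z := α • x + β • y with hz
  have hzC : z ∈ C := hC hx hy hα.le hβ.le hαβ
  have hs : (0:ℝ) ≤ β / α := by positivity
  have hsum : 1 + β / α = 1 / α := by field_simp; linarith
  have hpt : (1 + β / α) • z - (β / α) • y = x := by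
    rw [hsum, hz, smul_add, smul_smul, smul_smul, one_div,
      inv_mul_cancel₀ hα.ne', one_smul]
    have : α⁻¹ * β = β / α := by field_simp
    rw [this]
    abel
  have key := hmercer z hzC y hy (β / α) hs (by rw [hpt]; exact hx)
  rw [hpt, hsum] at key
  have hinv : h α * h (1 / α) = 1 := by
    rw [← hmul α (1 / α) hα (by positivity), mul_one_div_cancel hα.ne', h1]
  have hβα : h α * h (β / α) = h β := by
    rw [← hmul α (β / α) hα (by positivity), mul_div_cancel₀ β hα.ne']
  have hpα := hpos α hα
  have := mul_le_mul_of_nonneg_left key hpα.le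
  have e1 : h α * (h (1 / α) * f z - h (β / α) * f y) = f z - h β * f y := by
    rw [mul_sub, ← mul_assoc, ← mul_assoc, hinv, hβα, one_mul]
  linarith [this, e1]
end

section
/- Let X be a real vector space, h nonnegative on [0,1], and f : X → ℝ a nonnegative even h-convex function (f(−x) = f(x)). Then for all x, y ∈ X and t ∈ [0,1]: f((1−2t)x) + f((2t−1)y) ≤ [h(t)+h(1−t)]·[f((1−t)x+ty) + f(tx+(1−t)y)] ≤ [h(t)+h(1−t)]²·[f(x)+f(y)]. -/
theorem even_hconvex_chain
    {X : Type*} [AddCommGroup X] [Module ℝ X]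
    (h : ℝ → ℝ) (hh : ∀ t ∈ Set.Icc (0:ℝ) 1, 0 ≤ h t)
    (f : X → ℝ) (hf : ∀ x : X, 0 ≤ f x) (heven : ∀ x : X, f (-x) = f x)
    (hconv : ∀ x y : X, ∀ t ∈ Set.Icc (0:ℝ) 1,
        f (t • x + (1 - t) • y) ≤ h t * f x + h (1 - t) * f y) :
    ∀ x y : X, ∀ t ∈ Set.Icc (0:ℝ) 1,
      f ((1 - 2 * t) • x) + f ((2 * t - 1) • y) ≤
        (h t + h (1 - t)) * (f ((1 - t) • x + t • y) + f (t • x + (1 - t) • y)) ∧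
      (h t + h (1 - t)) * (f ((1 - t) • x + t • y) + f (t • x + (1 - t) • y)) ≤
        (h t + h (1 - t)) ^ 2 * (f x + f y) := by
  intro x y t ht
  obtain ⟨ht0, ht1⟩ := ht
  have ht' : (1 - t) ∈ Set.Icc (0:ℝ) 1 := ⟨by linarith, by linarith⟩
  set u := (1 - t) • x + t • y with hu
  set v := t • x + (1 - t) • y with hv
  have hA : 0 ≤ h t := hh t ⟨ht0, ht1⟩
  have hB : 0 ≤ h (1 - t) := hh _ ht'
  have h1 : f ((1 - 2 * t) • x) ≤ h t * f v + h (1 - t) * f u := by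
    have H := hconv (-v) u t ⟨ht0, ht1⟩
    have e : t • (-v) + (1 - t) • u = (1 - 2 * t) • x := by
      rw [hu, hv]; module
    rw [e, heven] at H
    exact H
  have h2 : f ((2 * t - 1) • y) ≤ h t * f u + h (1 - t) * f v := by
    have H := hconv u (-v) t ⟨ht0, ht1⟩
    have e : t • u + (1 - t) • (-v) = (2 * t - 1) • y := by
      rw [hu, hv]; module
    rw [e, heven] at H
    exact H
  have h3 : f u ≤ h (1 - t) * f x + h t * f y := by
    have H := hconv x y (1 - t) ht'
    have e : (1:ℝ) - (1 - t) = t := by ring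
    rw [e] at H
    exact H
  have h4 : f v ≤ h t * f x + h (1 - t) * f y := hconv x y t ⟨ht0, ht1⟩
  constructor
  · nlinarith [hf u, hf v]
  · nlinarith [hf x, hf y, mul_nonneg hA hB, sq_nonneg (h t + h (1 - t))]
end

section
/- Let f : ℝ → ℝ be a nonnegative even continuous h-convex function, where h is a nonnegative integrable function on [0,1]. Then for all x, y ∈ ℝ: (1/2)∫₀¹ [f(tx)+f(ty)] dt ≤ ∫₀¹ [h(t)+h(1−t)]·f(tx+(1−t)y) dt. -/
open MeasureTheory intervalIntegral

theorem even_hconvex_integral_inequality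
    (h : ℝ → ℝ) (hh : ∀ t ∈ Set.Icc (0:ℝ) 1, 0 ≤ h t)
    (hint : IntervalIntegrable h MeasureTheory.volume 0 1)
    (f : ℝ → ℝ) (hf : ∀ x : ℝ, 0 ≤ f x) (hfc : Continuous f)
    (heven : ∀ x : ℝ, f (-x) = f x)
    (hconv : ∀ x y : ℝ, ∀ t ∈ Set.Icc (0:ℝ) 1,
        f (t * x + (1 - t) * y) ≤ h t * f x + h (1 - t) * f y) :
    ∀ x y : ℝ,
      (1 / 2) * ∫ t in (0:ℝ)..1, (f (t * x) + f (t * y)) ≤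
        ∫ t in (0:ℝ)..1, (h t + h (1 - t)) * f (t * x + (1 - t) * y) := by
  intro x y
  -- abbreviations
  have hca : Continuous fun t : ℝ => f (t * x + (1 - t) * y) :=
    hfc.comp (by continuity)
  have hcb : Continuous fun t : ℝ => f ((1 - t) * x + t * y) :=
    hfc.comp (by continuity)
  have hcx : Continuous fun t : ℝ => f (t * x) := hfc.comp (by continuity)
  have hcy : Continuous fun t : ℝ => f (t * y) := hfc.comp (by continuity)
  -- integrability of h (1 - ·)
  have hh1 : IntervalIntegrable (fun t => h (1 - t)) volume 0 1 := by
    have := (hint.comp_sub_left 1).symm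
    simpa using this
  have hhsum : IntervalIntegrable (fun t => h t + h (1 - t)) volume 0 1 := hint.add hh1
  -- pointwise key inequality
  have key : ∀ t ∈ Set.Icc (0:ℝ) 1,
      f ((2 * t - 1) * x) + f ((1 - 2 * t) * y) ≤
        (h t + h (1 - t)) * (f (t * x + (1 - t) * y) + f ((1 - t) * x + t * y)) := by
    intro t ht
    have h1 := hconv (t * x + (1 - t) * y) (-((1 - t) * x + t * y)) t ht
    have h2 := hconv (-((1 - t) * x + t * y)) (t * x + (1 - t) * y) t ht
    have e1 : t * (t * x + (1 - t) * y) + (1 - t) * -((1 - t) * x + t * y)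
        = (2 * t - 1) * x := by ring
    have e2 : t * -((1 - t) * x + t * y) + (1 - t) * (t * x + (1 - t) * y)
        = (1 - 2 * t) * y := by ring
    rw [e1, heven ((1 - t) * x + t * y)] at h1
    rw [e2, heven ((1 - t) * x + t * y)] at h2
    nlinarith [h1, h2]
  -- ∫₀¹ f((2t-1)x) dt = ∫₀¹ f(tx) dt   (and similarly for y)
  have half : ∀ z : ℝ, (∫ t in (-1:ℝ)..1, f (t * z)) = 2 * ∫ t in (0:ℝ)..1, f (t * z) := by
    intro z
    have hcz : Continuous fun t : ℝ => f (t * z) := hfc.comp (by continuity)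
    have hsplit := intervalIntegral.integral_add_adjacent_intervals
      (a := (-1:ℝ)) (b := 0) (c := 1) (f := fun t => f (t * z)) (μ := volume)
      (hcz.intervalIntegrable _ _) (hcz.intervalIntegrable _ _)
    have hneg : (∫ t in (0:ℝ)..1, f (-t * z)) = ∫ t in (-1:ℝ)..(0:ℝ), f (t * z) := by
      have := intervalIntegral.integral_comp_neg (a := (0:ℝ)) (b := 1)
        (fun t => f (t * z))
      simpa using this
    have heq : (∫ t in (0:ℝ)..1, f (-t * z)) = ∫ t in (0:ℝ)..1, f (t * z) := by
      congr 1
      funext t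
      rw [show -t * z = -(t * z) by ring, heven]
    rw [← hsplit, ← hneg, heq]
    ring
  have I1 : (∫ t in (0:ℝ)..1, f ((2 * t - 1) * x)) = ∫ t in (0:ℝ)..1, f (t * x) := by
    have := intervalIntegral.integral_comp_mul_add (a := (0:ℝ)) (b := 1)
      (fun t => f (t * x)) (two_ne_zero) (-1)
    simp only [mul_zero, mul_one] at this
    have e : (fun t : ℝ => f ((2 * t + -1) * x)) = fun t : ℝ => f ((2 * t - 1) * x) := by
      funext t; ring_nf
    rw [e] at this
    rw [this, show (0:ℝ) + -1 = (-1:ℝ) by norm_num, show (2:ℝ) + -1 = (1:ℝ) by norm_num,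
      half x, smul_eq_mul]
    ring
  have I2 : (∫ t in (0:ℝ)..1, f ((1 - 2 * t) * y)) = ∫ t in (0:ℝ)..1, f (t * y) := by
    have := intervalIntegral.integral_comp_mul_add (a := (0:ℝ)) (b := 1)
      (fun t => f (t * y)) (c := (-2:ℝ)) (by norm_num) 1
    simp only [mul_zero, mul_one] at this
    have e : (fun t : ℝ => f ((-2 * t + 1) * y)) = fun t : ℝ => f ((1 - 2 * t) * y) := by
      funext t; ring_nf
    rw [e] at this
    rw [this, show (0:ℝ) + 1 = (1:ℝ) by norm_num, show (-2:ℝ) + 1 = (-1:ℝ) by norm_num,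
      intervalIntegral.integral_symm (-1) 1, half y, smul_eq_mul]
    ring
  -- reflection of the right-hand side
  have I3 : (∫ t in (0:ℝ)..1, (h t + h (1 - t)) * f ((1 - t) * x + t * y))
      = ∫ t in (0:ℝ)..1, (h t + h (1 - t)) * f (t * x + (1 - t) * y) := by
    have := intervalIntegral.integral_comp_sub_left (a := (0:ℝ)) (b := 1)
      (fun t => (h t + h (1 - t)) * f (t * x + (1 - t) * y)) 1
    simp only [sub_zero, sub_self] at this
    have e : (fun t : ℝ => (h (1 - t) + h (1 - (1 - t))) * f ((1 - t) * x + (1 - (1 - t)) * y))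
        = fun t : ℝ => (h t + h (1 - t)) * f ((1 - t) * x + t * y) := by
      funext t
      rw [show (1:ℝ) - (1 - t) = t by ring]
      ring_nf
    rw [e] at this
    exact this
  -- integrability of products
  have hFa : IntervalIntegrable
      (fun t => (h t + h (1 - t)) * f (t * x + (1 - t) * y)) volume 0 1 :=
    hhsum.mul_continuousOn hca.continuousOn
  have hFb : IntervalIntegrable
      (fun t => (h t + h (1 - t)) * f ((1 - t) * x + t * y)) volume 0 1 :=
    hhsum.mul_continuousOn hcb.continuousOn
  have hFsum : IntervalIntegrable
      (fun t => (h t + h (1 - t)) * (f (t * x + (1 - t) * y) + f ((1 - t) * x + t * y)))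
      volume 0 1 :=
    hhsum.mul_continuousOn (hca.add hcb).continuousOn
  have hc1 : Continuous fun t : ℝ => f ((2 * t - 1) * x) :=
    hfc.comp (((continuous_const.mul continuous_id).sub continuous_const).mul continuous_const)
  have hc2 : Continuous fun t : ℝ => f ((1 - 2 * t) * y) :=
    hfc.comp ((continuous_const.sub (continuous_const.mul continuous_id)).mul continuous_const)
  have hL : IntervalIntegrable
      (fun t => f ((2 * t - 1) * x) + f ((1 - 2 * t) * y)) volume 0 1 :=
    (hc1.add hc2).intervalIntegrable _ _
  -- main inequality between integrals
  have main := intervalIntegral.integral_mono_on (μ := volume) zero_le_one hL hFsum key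
  have split1 : (∫ t in (0:ℝ)..1, (f ((2 * t - 1) * x) + f ((1 - 2 * t) * y)))
      = (∫ t in (0:ℝ)..1, f ((2 * t - 1) * x)) + ∫ t in (0:ℝ)..1, f ((1 - 2 * t) * y) :=
    intervalIntegral.integral_add (hc1.intervalIntegrable _ _) (hc2.intervalIntegrable _ _)
  have split2 : (∫ t in (0:ℝ)..1,
        (h t + h (1 - t)) * (f (t * x + (1 - t) * y) + f ((1 - t) * x + t * y)))
      = (∫ t in (0:ℝ)..1, (h t + h (1 - t)) * f (t * x + (1 - t) * y))
        + ∫ t in (0:ℝ)..1, (h t + h (1 - t)) * f ((1 - t) * x + t * y) := by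
    rw [← intervalIntegral.integral_add hFa hFb]
    congr 1; funext t; ring
  have split3 : (∫ t in (0:ℝ)..1, (f (t * x) + f (t * y)))
      = (∫ t in (0:ℝ)..1, f (t * x)) + ∫ t in (0:ℝ)..1, f (t * y) :=
    intervalIntegral.integral_add (hcx.intervalIntegrable _ _) (hcy.intervalIntegrable _ _)
  rw [split1, I1, I2, split2, I3] at main
  rw [split3]
  linarith
end

section
/- Let f : ℝ → ℝ be a nonnegative even continuous h-convex function, where h is nonnegative, integrable on [0,1], and super-additive (h(x+y) ≥ h(x)+h(y)). Then for all x, y: (1/2)∫₀¹ [f(tx)+f(ty)] dt ≤ h(1)·(∫₀¹ h(t) dt)·[f(x)+f(y)]. -/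
/-!
Writing `t * z = s * z + (1 - s) * (-z)` with `s = (1 + t) / 2` and using evenness, the mean of
`f` over `[0, z]` is the mean of `f` along the segment from `-z` to `z`, which h-convexity bounds by
`2 * (∫₀¹ h) * f z` (a Hermite–Hadamard type estimate). The remaining factor `h 1` costs nothing:
super-additivity gives `2 * h (1/2) ≤ h 1`, and h-convexity at the midpoint of `[z, z]` gives
`f z ≤ 2 * h (1/2) * f z`, so `f z ≤ h 1 * f z` for nonnegative `f`.
-/

open Set MeasureTheory intervalIntegral

def HConvex (h f : ℝ → ℝ) : Prop :=
  ∀ x y : ℝ, ∀ t ∈ Icc (0:ℝ) 1, f (t * x + (1 - t) * y) ≤ h t * f x + h (1 - t) * f y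

theorem integral_neg_to_self_of_even {g : ℝ → ℝ} (hg : Continuous g) (heven : ∀ x, g (-x) = g x)
    (a : ℝ) : ∫ x in -a..a, g x = 2 * ∫ x in (0:ℝ)..a, g x := by
  have hneg : ∫ x in -a..0, g x = ∫ x in (0:ℝ)..a, g x := by
    simpa only [neg_zero, heven] using (integral_comp_neg (a := 0) (b := a) g).symm
  rw [← integral_add_adjacent_intervals (hg.intervalIntegrable (-a) 0) (hg.intervalIntegrable 0 a),
    hneg, two_mul]

theorem integral_comp_two_mul_sub_one_of_even {g : ℝ → ℝ} (hg : Continuous g)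
    (heven : ∀ x, g (-x) = g x) : ∫ s in (0:ℝ)..1, g (2 * s - 1) = ∫ t in (0:ℝ)..1, g t := by
  rw [integral_comp_mul_sub g two_ne_zero, mul_zero, zero_sub, mul_one,
    show (2:ℝ) - 1 = 1 by norm_num, integral_neg_to_self_of_even hg heven, smul_eq_mul,
    inv_mul_cancel_left₀ two_ne_zero]

namespace HConvex

variable {h f : ℝ → ℝ}

theorem integral_segment_le (hconv : HConvex h f) (hint : IntervalIntegrable h volume 0 1)
    (hfc : Continuous f) (x y : ℝ) :
    ∫ s in (0:ℝ)..1, f (s * x + (1 - s) * y) ≤ (∫ s in (0:ℝ)..1, h s) * (f x + f y) := by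
  have hint' : IntervalIntegrable (fun s => h (1 - s)) volume 0 1 := by
    simpa using (hint.comp_sub_left 1).symm
  have hsymm : ∫ s in (0:ℝ)..1, h (1 - s) = ∫ s in (0:ℝ)..1, h s := by
    simp [integral_comp_sub_left h 1]
  calc ∫ s in (0:ℝ)..1, f (s * x + (1 - s) * y)
      ≤ ∫ s in (0:ℝ)..1, (h s * f x + h (1 - s) * f y) :=
        integral_mono_on zero_le_one
          ((by fun_prop : Continuous fun s => f (s * x + (1 - s) * y)).intervalIntegrable 0 1)
          ((hint.mul_const _).add (hint'.mul_const _))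
          (hconv x y)
    _ = (∫ s in (0:ℝ)..1, h s) * (f x + f y) := by
        rw [intervalIntegral.integral_add (hint.mul_const _) (hint'.mul_const _),
          intervalIntegral.integral_mul_const, intervalIntegral.integral_mul_const, hsymm, mul_add]

theorem integral_comp_mul_le_of_even (hconv : HConvex h f) (hint : IntervalIntegrable h volume 0 1)
    (hfc : Continuous f) (heven : ∀ x, f (-x) = f x) (z : ℝ) :
    ∫ t in (0:ℝ)..1, f (t * z) ≤ 2 * (∫ t in (0:ℝ)..1, h t) * f z := by
  have hsegment : ∫ t in (0:ℝ)..1, f (t * z) = ∫ s in (0:ℝ)..1, f (s * z + (1 - s) * -z) := by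
    rw [← integral_comp_two_mul_sub_one_of_even (g := fun t => f (t * z)) (by fun_prop)
      (fun t => by simp only [neg_mul, heven])]
    congr 1; ext s; ring_nf
  calc ∫ t in (0:ℝ)..1, f (t * z)
      ≤ (∫ t in (0:ℝ)..1, h t) * (f z + f (-z)) :=
        hsegment ▸ hconv.integral_segment_le hint hfc z (-z)
    _ = 2 * (∫ t in (0:ℝ)..1, h t) * f z := by rw [heven]; ring

theorem le_mul_apply_one (hconv : HConvex h f) (hsuper : h (1/2) + h (1/2) ≤ h 1)
    (hf : ∀ x, 0 ≤ f x) (z : ℝ) : f z ≤ h 1 * f z := by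
  have hmid := hconv z z (1/2) ⟨by norm_num, by norm_num⟩
  rw [show 1 / 2 * z + (1 - 1 / 2) * z = z by ring, show (1:ℝ) - 1 / 2 = 1 / 2 by norm_num] at hmid
  nlinarith [hf z]

end HConvex

theorem even_hconvex_integral_inequality_superadditive
    (h : ℝ → ℝ) (hh : ∀ t ∈ Set.Icc (0:ℝ) 1, 0 ≤ h t)
    (hint : IntervalIntegrable h MeasureTheory.volume 0 1)
    (hsuper : ∀ a b : ℝ, 0 ≤ a → 0 ≤ b → a + b ≤ 1 → h a + h b ≤ h (a + b))
    (f : ℝ → ℝ) (hf : ∀ x : ℝ, 0 ≤ f x) (hfc : Continuous f)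
    (heven : ∀ x : ℝ, f (-x) = f x)
    (hconv : ∀ x y : ℝ, ∀ t ∈ Set.Icc (0:ℝ) 1,
        f (t * x + (1 - t) * y) ≤ h t * f x + h (1 - t) * f y) :
    ∀ x y : ℝ,
      (1 / 2) * ∫ t in (0:ℝ)..1, (f (t * x) + f (t * y)) ≤
        h 1 * (∫ t in (0:ℝ)..1, h t) * (f x + f y) := by
  intro x y
  have hI : 0 ≤ ∫ t in (0:ℝ)..1, h t := integral_nonneg zero_le_one hh
  have hsum : f x + f y ≤ h 1 * (f x + f y) := by
    have hmid : h (1/2) + h (1/2) ≤ h 1 := by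
      simpa only [add_halves] using hsuper (1/2) (1/2) (by norm_num) (by norm_num) (by norm_num)
    linarith [HConvex.le_mul_apply_one hconv hmid hf x, HConvex.le_mul_apply_one hconv hmid hf y]
  have hfint (z : ℝ) : IntervalIntegrable (fun t => f (t * z)) volume 0 1 :=
    (by fun_prop : Continuous fun t => f (t * z)).intervalIntegrable 0 1
  rw [intervalIntegral.integral_add (hfint x) (hfint y), mul_add]
  calc (1 / 2) * (∫ t in (0:ℝ)..1, f (t * x)) + (1 / 2) * ∫ t in (0:ℝ)..1, f (t * y)
      ≤ (∫ t in (0:ℝ)..1, h t) * (f x + f y) := by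
        linarith [HConvex.integral_comp_mul_le_of_even hconv hint hfc heven x,
          HConvex.integral_comp_mul_le_of_even hconv hint hfc heven y]
    _ ≤ h 1 * (∫ t in (0:ℝ)..1, h t) * (f x + f y) := by
        rw [mul_comm (h 1), mul_assoc]; exact mul_le_mul_of_nonneg_left hsum hI
end

section
/- Let X be a real vector space and f : X → ℝ a nonnegative even convex function. Then for all x, y ∈ X and t ∈ [0,1]: f((1−2t)x) + f((2t−1)y) ≤ f((1−t)x+ty) + f(tx+(1−t)y) ≤ f(x) + f(y). -/
theorem even_convex_chain
    {X : Type*} [AddCommGroup X] [Module ℝ X]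
    (f : X → ℝ) (hf : ∀ x : X, 0 ≤ f x) (heven : ∀ x : X, f (-x) = f x)
    (hconv : ∀ x y : X, ∀ t ∈ Set.Icc (0:ℝ) 1,
        f (t • x + (1 - t) • y) ≤ t * f x + (1 - t) * f y) :
    ∀ x y : X, ∀ t ∈ Set.Icc (0:ℝ) 1,
      f ((1 - 2 * t) • x) + f ((2 * t - 1) • y) ≤
        f ((1 - t) • x + t • y) + f (t • x + (1 - t) • y) ∧
      f ((1 - t) • x + t • y) + f (t • x + (1 - t) • y) ≤ f x + f y := by
  intro x y t ht
  obtain ⟨ht0, ht1⟩ := ht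
  have ht' : (1 - t) ∈ Set.Icc (0:ℝ) 1 := ⟨by linarith, by linarith⟩
  set a := (1 - t) • x + t • y with ha
  set b := t • x + (1 - t) • y with hb
  constructor
  · have h1 : f ((1 - 2 * t) • x) ≤ (1 - t) * f a + t * f b := by
      have := hconv a (-b) (1 - t) ht'
      have e1 : (1 - t) • a + (1 - (1 - t)) • (-b) = (1 - 2 * t) • x := by
        rw [ha, hb]; module
      rw [e1, heven b] at this
      linarith
    have h2 : f ((2 * t - 1) • y) ≤ t * f a + (1 - t) * f b := by
      have := hconv (-a) b t ⟨ht0, ht1⟩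
      have e2 : t • (-a) + (1 - t) • b = -((2 * t - 1) • y) := by
        rw [ha, hb]; module
      rw [e2, heven, heven a] at this
      linarith
    linarith
  · have h1 := hconv x y (1 - t) ht'
    have h2 := hconv x y t ⟨ht0, ht1⟩
    have : (1 - (1 - t)) = t := by ring
    rw [this] at h1
    linarith
end

section
/- Let (X, ‖·‖) be a real normed space, x, y ∈ X, and 0 < p < 1. Then (‖x‖^p + ‖y‖^p)/(4(p+1)) ≤ ∫₀¹ ‖(1−t)x + ty‖^p dt ≤ ‖x‖^p + ‖y‖^p. -/
/-!
Every point of the segment has norm at most `max ‖x‖ ‖y‖`, which gives the upper bound. For the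
lower bound let `‖y‖ ≤ ‖x‖` (the integral is symmetric under `t ↦ 1 - t`); by the reverse
triangle inequality `‖(1 - t) • x + t • y‖ ≥ (1 - 2t) ‖x‖` on `[0, 1/2]`, and integrating the
`p`-th power of this over `[0, 1/2]` already gives `‖x‖ ^ p / (2 (p + 1))`.
-/

open intervalIntegral Set

theorem integral_one_sub_two_mul_rpow {p : ℝ} (hp : -1 < p) :
    ∫ t in (0:ℝ)..1/2, (1 - 2 * t) ^ p = 1 / (2 * (p + 1)) := by
  rw [integral_comp_sub_mul (fun t : ℝ => t ^ p) two_ne_zero, integral_rpow (.inl hp)]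
  have : p + 1 ≠ 0 := by linarith
  norm_num [Real.zero_rpow this]
  field_simp

section

variable {X : Type*} [NormedAddCommGroup X] [NormedSpace ℝ X]

theorem integral_comp_segment_comm {E : Type*} [NormedAddCommGroup E] [NormedSpace ℝ E]
    (g : X → E) (x y : X) :
    ∫ t in (0:ℝ)..1, g ((1 - t) • x + t • y) = ∫ t in (0:ℝ)..1, g ((1 - t) • y + t • x) := by
  simpa [add_comm] using
    (integral_comp_sub_left (a := 0) (b := 1) (fun t => g ((1 - t) • x + t • y)) 1).symm

theorem norm_segment_le_max (x y : X) {t : ℝ} (ht : t ∈ Icc 0 1) :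
    ‖(1 - t) • x + t • y‖ ≤ max ‖x‖ ‖y‖ :=
  (convexOn_norm convex_univ).le_max_of_mem_segment (mem_univ x) (mem_univ y)
    ⟨1 - t, t, by linarith [ht.2], ht.1, by ring, rfl⟩

theorem sub_le_norm_segment (x y : X) {t : ℝ} (ht : t ∈ Icc 0 1) :
    (1 - t) * ‖x‖ - t * ‖y‖ ≤ ‖(1 - t) • x + t • y‖ := by
  have h := norm_sub_norm_le ((1 - t) • x) (-(t • y))
  rw [sub_neg_eq_add, norm_neg, norm_smul, norm_smul,
    Real.norm_of_nonneg (sub_nonneg.2 ht.2), Real.norm_of_nonneg ht.1] at h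
  linarith

theorem continuous_norm_segment_rpow (x y : X) {p : ℝ} (hp : 0 ≤ p) :
    Continuous fun t : ℝ => ‖(1 - t) • x + t • y‖ ^ p :=
  (Real.continuous_rpow_const hp).comp (by fun_prop)

theorem integral_norm_segment_rpow_le (x y : X) {p : ℝ} (hp : 0 ≤ p) :
    ∫ t in (0:ℝ)..1, ‖(1 - t) • x + t • y‖ ^ p ≤ ‖x‖ ^ p + ‖y‖ ^ p := by
  have hmax : max ‖x‖ ‖y‖ ^ p ≤ ‖x‖ ^ p + ‖y‖ ^ p := by
    rcases max_cases ‖x‖ ‖y‖ with ⟨h, -⟩ | ⟨h, -⟩ <;> rw [h]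
    · linarith [Real.rpow_nonneg (norm_nonneg y) p]
    · linarith [Real.rpow_nonneg (norm_nonneg x) p]
  calc ∫ t in (0:ℝ)..1, ‖(1 - t) • x + t • y‖ ^ p
      ≤ ∫ _ in (0:ℝ)..1, max ‖x‖ ‖y‖ ^ p :=
        integral_mono_on zero_le_one ((continuous_norm_segment_rpow x y hp).intervalIntegrable _ _)
          intervalIntegrable_const fun t ht =>
            Real.rpow_le_rpow (norm_nonneg _) (norm_segment_le_max x y ht) hp
    _ ≤ ‖x‖ ^ p + ‖y‖ ^ p := by simpa using hmax

theorem div_le_integral_norm_segment_rpow (x y : X) {p : ℝ} (hp : 0 ≤ p) (hyx : ‖y‖ ≤ ‖x‖) :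
    ‖x‖ ^ p / (2 * (p + 1)) ≤ ∫ t in (0:ℝ)..1, ‖(1 - t) • x + t • y‖ ^ p := by
  have hcont := continuous_norm_segment_rpow x y hp
  calc ‖x‖ ^ p / (2 * (p + 1))
      = ∫ t in (0:ℝ)..1/2, (1 - 2 * t) ^ p * ‖x‖ ^ p := by
        rw [integral_mul_const, integral_one_sub_two_mul_rpow (by linarith)]
        ring
    _ ≤ ∫ t in (0:ℝ)..1/2, ‖(1 - t) • x + t • y‖ ^ p := by
        refine integral_mono_on (by norm_num) ?_ (hcont.intervalIntegrable _ _) fun t ht => ?_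
        · exact ((Real.continuous_rpow_const hp).comp (by fun_prop)).mul continuous_const
            |>.intervalIntegrable _ _
        have h2t : 0 ≤ 1 - 2 * t := by linarith [ht.2]
        rw [← Real.mul_rpow h2t (norm_nonneg x)]
        refine Real.rpow_le_rpow (mul_nonneg h2t (norm_nonneg x)) ?_ hp
        have := sub_le_norm_segment x y ⟨ht.1, by linarith [ht.2]⟩
        linarith [mul_le_mul_of_nonneg_left hyx ht.1]
    _ ≤ ∫ t in (0:ℝ)..1, ‖(1 - t) • x + t • y‖ ^ p :=
        integral_mono_interval le_rfl (by norm_num) (by norm_num)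
          (Filter.Eventually.of_forall fun t => Real.rpow_nonneg (norm_nonneg _) p)
          (hcont.intervalIntegrable _ _)

theorem add_div_le_integral_norm_segment_rpow (x y : X) {p : ℝ} (hp : 0 ≤ p) :
    (‖x‖ ^ p + ‖y‖ ^ p) / (4 * (p + 1)) ≤ ∫ t in (0:ℝ)..1, ‖(1 - t) • x + t • y‖ ^ p := by
  wlog hyx : ‖y‖ ≤ ‖x‖ generalizing x y
  · rw [add_comm, integral_comp_segment_comm (fun z => ‖z‖ ^ p)]
    exact this y x (le_of_not_ge hyx)
  have hq : 0 < p + 1 := by linarith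
  calc (‖x‖ ^ p + ‖y‖ ^ p) / (4 * (p + 1)) ≤ ‖x‖ ^ p / (2 * (p + 1)) := by
        rw [div_le_div_iff₀ (by positivity) (by positivity)]
        nlinarith [Real.rpow_le_rpow (norm_nonneg y) hyx hp]
    _ ≤ _ := div_le_integral_norm_segment_rpow x y hp hyx

end

theorem norm_rpow_hermite_hadamard_general
    {X : Type*} [NormedAddCommGroup X] [NormedSpace ℝ X]
    (x y : X) (p : ℝ) (hp0 : 0 < p) :
    (‖x‖ ^ p + ‖y‖ ^ p) / (4 * (p + 1)) ≤
      (∫ t in (0:ℝ)..1, ‖(1 - t) • x + t • y‖ ^ p) ∧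
    (∫ t in (0:ℝ)..1, ‖(1 - t) • x + t • y‖ ^ p) ≤ ‖x‖ ^ p + ‖y‖ ^ p :=
  ⟨add_div_le_integral_norm_segment_rpow x y hp0.le, integral_norm_segment_rpow_le x y hp0.le⟩

theorem norm_rpow_hermite_hadamard
    {X : Type*} [NormedAddCommGroup X] [NormedSpace ℝ X]
    (x y : X) (p : ℝ) (hp0 : 0 < p) (hp1 : p < 1) :
    (‖x‖ ^ p + ‖y‖ ^ p) / (4 * (p + 1)) ≤
      (∫ t in (0:ℝ)..1, ‖(1 - t) • x + t • y‖ ^ p) ∧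
    (∫ t in (0:ℝ)..1, ‖(1 - t) • x + t • y‖ ^ p) ≤ ‖x‖ ^ p + ‖y‖ ^ p :=
  norm_rpow_hermite_hadamard_general x y p hp0
end

section
/- Let h be nonnegative on [0,1] and f a nonnegative h-convex function on an interval containing [x,y] with 0 < x ≤ y. Then for every z ∈ [x,y], writing z = λx + (1−λ)y with λ ∈ [0,1], one has f(x+y−z) ≤ [h(λ)+h(1−λ)]·[f(x)+f(y)] − f(z). Moreover, if h is super-additive, then f(x+y−z) ≤ h(1)·[f(x)+f(y)] − f(z). -/
theorem hconvex_mercer_lemma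
    (h : ℝ → ℝ) (hh : ∀ t ∈ Set.Icc (0:ℝ) 1, 0 ≤ h t)
    (x y : ℝ) (hx : 0 < x) (hxy : x ≤ y)
    (f : ℝ → ℝ) (hf : ∀ t ∈ Set.Icc x y, 0 ≤ f t)
    (hconv : ∀ a ∈ Set.Icc x y, ∀ b ∈ Set.Icc x y, ∀ t ∈ Set.Icc (0:ℝ) 1,
        f (t * a + (1 - t) * b) ≤ h t * f a + h (1 - t) * f b)
    (z : ℝ) (hz : z ∈ Set.Icc x y)
    (lam : ℝ) (hlam : lam ∈ Set.Icc (0:ℝ) 1) (hzlam : z = lam * x + (1 - lam) * y) :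
    f (x + y - z) ≤ (h lam + h (1 - lam)) * (f x + f y) - f z ∧
    ((∀ a b : ℝ, 0 ≤ a → 0 ≤ b → a + b ≤ 1 → h a + h b ≤ h (a + b)) →
      f (x + y - z) ≤ h 1 * (f x + f y) - f z) := by
  obtain ⟨hl0, hl1⟩ := hlam
  have hxm : x ∈ Set.Icc x y := ⟨le_refl x, hxy⟩
  have hym : y ∈ Set.Icc x y := ⟨hxy, le_refl y⟩
  have h1 : f z ≤ h lam * f x + h (1 - lam) * f y := by
    rw [hzlam]; exact hconv x hxm y hym lam ⟨hl0, hl1⟩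
  have h1m : (1 - lam) ∈ Set.Icc (0:ℝ) 1 := ⟨by linarith, by linarith⟩
  have h2 : f (x + y - z) ≤ h (1 - lam) * f x + h lam * f y := by
    have := hconv x hxm y hym (1 - lam) h1m
    rw [show (1 - (1 - lam)) = lam by ring] at this
    rw [show x + y - z = (1 - lam) * x + lam * y by rw [hzlam]; ring]
    exact this
  have key : f (x + y - z) ≤ (h lam + h (1 - lam)) * (f x + f y) - f z := by nlinarith
  refine ⟨key, fun hsup => ?_⟩
  have hs : h lam + h (1 - lam) ≤ h 1 := by
    have := hsup lam (1 - lam) hl0 (by linarith) (by linarith)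
    rwa [show lam + (1 - lam) = 1 by ring] at this
  have hfx := hf x hxm
  have hfy := hf y hym
  nlinarith
end

section
/- Let f be a nonnegative h-convex function on an interval containing 0 < x₁ ≤ ⋯ ≤ xₙ, h nonnegative, super-multiplicative and super-additive, t₁,…,tₙ ≥ 0 with ∑ tⱼ = 1 and ∑ⱼ h(tⱼ) ≤ 1. Then f(x₁ + xₙ − ∑ⱼ tⱼxⱼ) ≤ h(1)·(f(x₁)+f(xₙ)) − ∑ⱼ h(tⱼ)f(xⱼ). If moreover h is multiplicative (so h(1)=1), then f(x₁ + xₙ − ∑ⱼ tⱼxⱼ) ≤ f(x₁)+f(xₙ) − ∑ⱼ h(tⱼ)f(xⱼ). -/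
lemma hjensen_aux (h : ℝ → ℝ) (hh : ∀ t ∈ Set.Icc (0:ℝ) 1, 0 ≤ h t)
    (hsupmul : ∀ a b : ℝ, a ∈ Set.Icc (0:ℝ) 1 → b ∈ Set.Icc (0:ℝ) 1 →
      h a * h b ≤ h (a * b))
    (h0 : h 0 = 0)
    (f : ℝ → ℝ) (hf : ∀ s : ℝ, 0 ≤ f s)
    (hconv : ∀ a b : ℝ, ∀ t ∈ Set.Icc (0:ℝ) 1,
        f (t * a + (1 - t) * b) ≤ h t * f a + h (1 - t) * f b) :
    ∀ (n : ℕ) (w z : Fin (n+1) → ℝ), (∀ j, 0 ≤ w j) → ∑ j, w j = 1 →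
      f (∑ j, w j * z j) ≤ ∑ j, h (w j) * f (z j) := by
  intro n
  induction n with
  | zero =>
    intro w z hw hsum
    rw [Fin.sum_univ_one] at hsum ⊢
    rw [Fin.sum_univ_one, hsum, one_mul]
    have := hconv (z 0) (z 0) 1 (by norm_num)
    simpa [h0] using this
  | succ m ih =>
    intro w z hw hsum
    have hsplit : ∑ j : Fin (m+2), w j = w 0 + ∑ j : Fin (m+1), w j.succ :=
      Fin.sum_univ_succ w
    have hrest : ∑ j : Fin (m+1), w j.succ = 1 - w 0 := by
      rw [hsum] at hsplit; linarith
    have hw0 : 0 ≤ w 0 := hw 0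
    have hw0le : w 0 ≤ 1 := by
      have : 0 ≤ ∑ j : Fin (m+1), w j.succ :=
        Finset.sum_nonneg fun j _ => hw j.succ
      linarith
    by_cases h1 : w 0 = 1
    · -- all other weights are zero
      have hz : ∀ j : Fin (m+1), w j.succ = 0 := by
        intro j
        have hle : w j.succ ≤ ∑ i : Fin (m+1), w i.succ :=
          Finset.single_le_sum (fun i _ => hw i.succ) (Finset.mem_univ j)
        have := hw j.succ
        rw [hrest, h1] at hle
        linarith
      have e1 : ∑ j : Fin (m+2), w j * z j = z 0 := by
        rw [Fin.sum_univ_succ]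
        simp [hz, h1]
      have e2 : ∑ j : Fin (m+2), h (w j) * f (z j) = h 1 * f (z 0) := by
        rw [Fin.sum_univ_succ]
        simp [hz, h0, h1]
      rw [e1, e2]
      have := hconv (z 0) (z 0) 1 (by norm_num)
      simpa [h0] using this
    · have hr : 0 < 1 - w 0 := lt_of_le_of_ne (by linarith) (by
        intro hc; exact h1 (by linarith))
      set r := 1 - w 0 with hrdef
      set w' : Fin (m+1) → ℝ := fun j => w j.succ / r with hw'
      set z' : Fin (m+1) → ℝ := fun j => z j.succ with hz'
      have hw'nn : ∀ j, 0 ≤ w' j := fun j => div_nonneg (hw j.succ) hr.le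
      have hw'sum : ∑ j, w' j = 1 := by
        rw [hw', ← Finset.sum_div, hrest]
        field_simp
      have hw'le : ∀ j, w' j ≤ 1 := by
        intro j
        rw [hw', div_le_one hr]
        have hle : w j.succ ≤ ∑ i : Fin (m+1), w i.succ :=
          Finset.single_le_sum (fun i _ => hw i.succ) (Finset.mem_univ j)
        rw [hrest] at hle; exact hle
      have key : ∑ j : Fin (m+2), w j * z j = w 0 * z 0 + r * ∑ j, w' j * z' j := by
        rw [Fin.sum_univ_succ, Finset.mul_sum]
        congr 1
        apply Finset.sum_congr rfl
        intro j _
        rw [hw', hz']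
        field_simp
      rw [key]
      have step1 := hconv (z 0) (∑ j, w' j * z' j) (w 0) ⟨hw0, hw0le⟩
      have ihz := ih w' z' hw'nn hw'sum
      have hrnn : 0 ≤ h r := hh r ⟨hr.le, by rw [hrdef]; linarith⟩
      have step2 : h r * f (∑ j, w' j * z' j) ≤ ∑ j : Fin (m+1), h (w j.succ) * f (z j.succ) := by
        calc h r * f (∑ j, w' j * z' j) ≤ h r * ∑ j, h (w' j) * f (z' j) :=
              mul_le_mul_of_nonneg_left ihz hrnn
          _ = ∑ j, h r * h (w' j) * f (z' j) := by
              rw [Finset.mul_sum]; apply Finset.sum_congr rfl; intros; ring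
          _ ≤ ∑ j : Fin (m+1), h (w j.succ) * f (z j.succ) := by
              apply Finset.sum_le_sum
              intro j _
              have hm := hsupmul r (w' j) ⟨hr.le, by rw [hrdef]; linarith⟩
                ⟨hw'nn j, hw'le j⟩
              have hrw : r * w' j = w j.succ := by
                rw [hw']; field_simp
              rw [hrw] at hm
              have : h r * h (w' j) * f (z' j) ≤ h (w j.succ) * f (z' j) :=
                mul_le_mul_of_nonneg_right hm (hf _)
              simpa [hz'] using this
      calc f (w 0 * z 0 + r * ∑ j, w' j * z' j)
          ≤ h (w 0) * f (z 0) + h (1 - w 0) * f (∑ j, w' j * z' j) := step1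
        _ ≤ h (w 0) * f (z 0) + ∑ j : Fin (m+1), h (w j.succ) * f (z j.succ) := by
            rw [← hrdef]; linarith [step2]
        _ = ∑ j : Fin (m+2), h (w j) * f (z j) := (Fin.sum_univ_succ fun j => h (w j) * f (z j)).symm

theorem hconvex_jensen_mercer_superadditive
    (n : ℕ)
    (h : ℝ → ℝ) (hh : ∀ t ∈ Set.Icc (0:ℝ) 1, 0 ≤ h t)
    (hsupmul : ∀ a b : ℝ, a ∈ Set.Icc (0:ℝ) 1 → b ∈ Set.Icc (0:ℝ) 1 →
      h a * h b ≤ h (a * b))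
    (hsupadd : ∀ a b : ℝ, 0 ≤ a → 0 ≤ b → a + b ≤ 1 → h a + h b ≤ h (a + b))
    (x : Fin (n + 1) → ℝ) (hx0 : 0 < x 0) (hmono : Monotone x)
    (f : ℝ → ℝ) (hf : ∀ s : ℝ, 0 ≤ f s)
    (hconv : ∀ a b : ℝ, ∀ t ∈ Set.Icc (0:ℝ) 1,
        f (t * a + (1 - t) * b) ≤ h t * f a + h (1 - t) * f b)
    (t : Fin (n + 1) → ℝ) (ht : ∀ j, 0 ≤ t j) (htsum : ∑ j, t j = 1)
    (hhsum : ∑ j, h (t j) ≤ 1) :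
    f (x 0 + x (Fin.last n) - ∑ j, t j * x j) ≤
      h 1 * (f (x 0) + f (x (Fin.last n))) - ∑ j, h (t j) * f (x j) ∧
    ((∀ a b : ℝ, a ∈ Set.Icc (0:ℝ) 1 → b ∈ Set.Icc (0:ℝ) 1 → h (a * b) = h a * h b) →
      f (x 0 + x (Fin.last n) - ∑ j, t j * x j) ≤
        f (x 0) + f (x (Fin.last n)) - ∑ j, h (t j) * f (x j)) := by
  have h0 : h 0 = 0 := by
    have h1 := hsupadd 0 0 le_rfl le_rfl (by norm_num)
    have h2 := hh 0 (by norm_num)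
    simp at h1
    linarith
  set X0 := x 0 with hX0
  set Xn := x (Fin.last n) with hXn
  have hX0n : X0 ≤ Xn := hmono (Fin.zero_le _)
  have hxle : ∀ j, X0 ≤ x j ∧ x j ≤ Xn := fun j =>
    ⟨hmono (Fin.zero_le j), hmono (Fin.le_last j)⟩
  -- pointwise Mercer step
  have F0 : 0 ≤ f X0 + f Xn := by linarith [hf X0, hf Xn]
  have key : ∀ j, f (X0 + Xn - x j) ≤ h 1 * (f X0 + f Xn) - f (x j) := by
    intro j
    obtain ⟨hj1, hj2⟩ := hxle j
    obtain ⟨s, hs01, hcomb⟩ : ∃ s : ℝ, s ∈ Set.Icc (0:ℝ) 1 ∧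
        s * X0 + (1 - s) * Xn = x j := by
      by_cases hd : Xn = X0
      · exact ⟨1, by norm_num, by rw [hd]; linarith⟩
      · have hlt : X0 < Xn := lt_of_le_of_ne hX0n (Ne.symm hd)
        refine ⟨(Xn - x j) / (Xn - X0), ⟨div_nonneg (by linarith) (by linarith),
          (div_le_one (by linarith)).2 (by linarith)⟩, ?_⟩
        have hne : Xn - X0 ≠ 0 := by linarith
        have hs : (Xn - x j) / (Xn - X0) * (Xn - X0) = Xn - x j :=
          div_mul_cancel₀ _ hne
        linear_combination -hs
    obtain ⟨hs0, hs1⟩ := hs01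
    have c1 := hconv X0 Xn s ⟨hs0, hs1⟩
    rw [hcomb] at c1
    have c2 := hconv X0 Xn (1 - s) ⟨by linarith, by linarith⟩
    have e1 : (1:ℝ) - (1 - s) = s := by ring
    rw [e1] at c2
    have e2 : (1 - s) * X0 + s * Xn = X0 + Xn - x j := by linarith
    rw [e2] at c2
    have hadd := hsupadd s (1 - s) hs0 (by linarith) (by linarith)
    have e3 : s + (1 - s) = 1 := by ring
    rw [e3] at hadd
    have hhs : 0 ≤ h s := hh s ⟨hs0, hs1⟩
    have hhs' : 0 ≤ h (1 - s) := hh (1 - s) ⟨by linarith, by linarith⟩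
    nlinarith [hf X0, hf Xn]
  -- reformulate the argument as a convex combination
  have harg : X0 + Xn - ∑ j, t j * x j = ∑ j, t j * (X0 + Xn - x j) := by
    have : ∑ j, t j * (X0 + Xn - x j)
        = (∑ j, t j) * (X0 + Xn) - ∑ j, t j * x j := by
      rw [Finset.sum_mul, ← Finset.sum_sub_distrib]
      apply Finset.sum_congr rfl
      intros; ring
    rw [this, htsum, one_mul]
  have hjen := hjensen_aux h hh hsupmul h0 f hf hconv n t
    (fun j => X0 + Xn - x j) ht htsum
  have htj01 : ∀ j, t j ∈ Set.Icc (0:ℝ) 1 := by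
    intro j
    refine ⟨ht j, ?_⟩
    have hle : t j ≤ ∑ i, t i :=
      Finset.single_le_sum (fun i _ => ht i) (Finset.mem_univ j)
    rw [htsum] at hle; exact hle
  have hhtnn : ∀ j, 0 ≤ h (t j) := fun j => hh (t j) (htj01 j)
  have hhsnn : 0 ≤ ∑ j, h (t j) := Finset.sum_nonneg fun j _ => hhtnn j
  have hh1nn : 0 ≤ h 1 := hh 1 (by norm_num)
  have step : f (X0 + Xn - ∑ j, t j * x j)
      ≤ h 1 * (f X0 + f Xn) - ∑ j, h (t j) * f (x j) := by
    calc f (X0 + Xn - ∑ j, t j * x j)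
        = f (∑ j, t j * (X0 + Xn - x j)) := by rw [harg]
      _ ≤ ∑ j, h (t j) * f (X0 + Xn - x j) := hjen
      _ ≤ ∑ j, h (t j) * (h 1 * (f X0 + f Xn) - f (x j)) := by
          apply Finset.sum_le_sum
          intro j _
          exact mul_le_mul_of_nonneg_left (key j) (hhtnn j)
      _ = (∑ j, h (t j)) * (h 1 * (f X0 + f Xn)) - ∑ j, h (t j) * f (x j) := by
          rw [Finset.sum_mul, ← Finset.sum_sub_distrib]
          apply Finset.sum_congr rfl
          intros; ring
      _ ≤ h 1 * (f X0 + f Xn) - ∑ j, h (t j) * f (x j) := by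
          have : (∑ j, h (t j)) * (h 1 * (f X0 + f Xn)) ≤ 1 * (h 1 * (f X0 + f Xn)) :=
            mul_le_mul_of_nonneg_right hhsum (by positivity)
          linarith
  refine ⟨step, fun _ => ?_⟩
  have hmul := hsupmul 1 1 (by norm_num) (by norm_num)
  norm_num at hmul
  have h1le : h 1 ≤ 1 := by nlinarith
  have : h 1 * (f X0 + f Xn) ≤ f X0 + f Xn := by nlinarith
  linarith
end

section
/- Let h be a nonnegative super-multiplicative function on [0,1] and f a nonnegative h-convex function on an interval I. Then for positive reals t₁,…,tₙ with Tₙ = ∑ tⱼ and points x₁,…,xₙ ∈ I: f((1/Tₙ)∑ⱼ tⱼxⱼ) ≤ ∑ⱼ h(tⱼ/Tₙ)·f(xⱼ). -/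
/-!
Induct on the number of points. Split off one point `z a`: the center of mass of all points is a
two-point convex combination of `z a` and the center of mass `y` of the others, so h-convexity
bounds `f` there by `h(w a / T) f(z a) + h(W / T) f(y)`, with `W` the weight of the others and `T`
the total weight. By induction `f(y) ≤ ∑ h(w j / W) f(z j)`, and super-multiplicativity turns
`h(W / T) h(w j / W)` into at most `h(w j / T)`; nonnegativity of `h` and `f` lets these bounds be
multiplied and added.
-/

open Finset Set

def HConvexOn {E : Type*} [AddCommGroup E] [Module ℝ E]
    (h : ℝ → ℝ) (s : Set E) (f : E → ℝ) : Prop :=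
  Convex ℝ s ∧ ∀ a ∈ s, ∀ b ∈ s, ∀ t ∈ Icc (0 : ℝ) 1,
    f (t • a + (1 - t) • b) ≤ h t * f a + h (1 - t) * f b

def SuperMultiplicativeOn (h : ℝ → ℝ) (s : Set ℝ) : Prop :=
  ∀ a ∈ s, ∀ b ∈ s, h a * h b ≤ h (a * b)

lemma SuperMultiplicativeOn.mul_apply_div_le {h : ℝ → ℝ}
    (hh : SuperMultiplicativeOn h (Icc 0 1)) {u W T : ℝ} (hu : 0 ≤ u) (huW : u ≤ W)
    (hW : 0 < W) (hWT : W ≤ T) :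
    h (W / T) * h (u / W) ≤ h (u / T) := by
  have hT : 0 < T := hW.trans_le hWT
  have hWT' : W / T ∈ Icc (0 : ℝ) 1 := ⟨by positivity, (div_le_one hT).2 hWT⟩
  have huW' : u / W ∈ Icc (0 : ℝ) 1 := ⟨by positivity, (div_le_one hW).2 huW⟩
  have hcancel : W / T * (u / W) = u / T := by field_simp
  exact hcancel ▸ hh _ hWT' _ huW'

namespace HConvexOn

variable {ι E : Type*} [DecidableEq ι] [AddCommGroup E] [Module ℝ E]
  {h : ℝ → ℝ} {s : Set E} {f : E → ℝ} {w : ι → ℝ} {z : ι → E}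

lemma map_centerMass_insert_le (hf : HConvexOn h s f) {a : ι} {u : Finset ι} (ha : a ∉ u)
    (hu : u.Nonempty) (hw : ∀ j ∈ insert a u, 0 < w j) (hz : ∀ j ∈ insert a u, z j ∈ s) :
    f ((insert a u).centerMass w z) ≤
      h (w a / ∑ j ∈ insert a u, w j) * f (z a) +
        h ((∑ j ∈ u, w j) / ∑ j ∈ insert a u, w j) * f (u.centerMass w z) := by
  have hwa : 0 < w a := hw a (mem_insert_self a u)
  have hW : 0 < ∑ j ∈ u, w j := sum_pos (fun j hj => hw j (mem_insert_of_mem hj)) hu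
  have hT : 0 < w a + ∑ j ∈ u, w j := by positivity
  have hy : u.centerMass w z ∈ s :=
    hf.1.centerMass_mem (fun j hj => (hw j (mem_insert_of_mem hj)).le) hW
      (fun j hj => hz j (mem_insert_of_mem hj))
  have hcompl :
      1 - w a / (w a + ∑ j ∈ u, w j) = (∑ j ∈ u, w j) / (w a + ∑ j ∈ u, w j) := by
    field_simp; ring
  have hmem : w a / (w a + ∑ j ∈ u, w j) ∈ Icc (0 : ℝ) 1 :=
    ⟨by positivity, (div_le_one hT).2 (by linarith)⟩
  rw [centerMass_insert _ _ _ ha hW.ne', sum_insert ha, ← hcompl]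
  exact hf.2 _ (hz a (mem_insert_self a u)) _ hy _ hmem

theorem map_centerMass_le (hf : HConvexOn h s f) (hh : ∀ t ∈ Icc (0 : ℝ) 1, 0 ≤ h t)
    (hsm : SuperMultiplicativeOn h (Icc 0 1)) (hf₀ : ∀ y ∈ s, 0 ≤ f y) {t : Finset ι}
    (ht : t.Nontrivial) (hw : ∀ j ∈ t, 0 < w j) (hz : ∀ j ∈ t, z j ∈ s) :
    f (t.centerMass w z) ≤ ∑ j ∈ t, h (w j / ∑ i ∈ t, w i) * f (z j) := by
  induction t using Finset.induction_on with
  | empty => simp at ht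
  | insert a u ha ih =>
    have hu : u.Nonempty := by
      rcases u.eq_empty_or_nonempty with rfl | hu
      · simp at ht
      · exact hu
    have hwu : ∀ j ∈ u, 0 < w j := fun j hj => hw j (mem_insert_of_mem hj)
    have hzu : ∀ j ∈ u, z j ∈ s := fun j hj => hz j (mem_insert_of_mem hj)
    have hWT : ∑ j ∈ u, w j ≤ ∑ j ∈ insert a u, w j := by
      rw [sum_insert ha]; linarith [hw a (mem_insert_self a u)]
    refine (hf.map_centerMass_insert_le ha hu hw hz).trans ?_
    set T := ∑ j ∈ insert a u, w j
    rw [sum_insert ha]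
    gcongr
    rcases hu.exists_eq_singleton_or_nontrivial with ⟨b, rfl⟩ | hu
    · simp [centerMass_singleton _ _ (hwu b (mem_singleton_self b)).ne']
    have hW : 0 < ∑ j ∈ u, w j := sum_pos hwu hu.nonempty
    calc h ((∑ j ∈ u, w j) / T) * f (u.centerMass w z)
        ≤ h ((∑ j ∈ u, w j) / T) *
            ∑ j ∈ u, h (w j / ∑ i ∈ u, w i) * f (z j) := by
          gcongr
          · exact hh _
              ⟨div_nonneg hW.le (hW.le.trans hWT), (div_le_one (hW.trans_le hWT)).2 hWT⟩
          · exact ih hu hwu hzu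
      _ = ∑ j ∈ u, h ((∑ j ∈ u, w j) / T) * h (w j / ∑ i ∈ u, w i) *
            f (z j) := by
          simp only [mul_sum, mul_assoc]
      _ ≤ ∑ j ∈ u, h (w j / T) * f (z j) := by
          gcongr with j hj
          · exact hf₀ _ (hzu j hj)
          · exact hsm.mul_apply_div_le (hwu j hj).le
              (single_le_sum (fun i hi => (hwu i hi).le) hj) hW hWT

end HConvexOn

theorem hconvex_jensen
    (n : ℕ) (hn : 2 ≤ n)
    (h : ℝ → ℝ) (hh : ∀ t ∈ Set.Icc (0:ℝ) 1, 0 ≤ h t)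
    (hsupmul : ∀ a b : ℝ, a ∈ Set.Icc (0:ℝ) 1 → b ∈ Set.Icc (0:ℝ) 1 →
      h a * h b ≤ h (a * b))
    (I : Set ℝ) (hI : Convex ℝ I)
    (f : ℝ → ℝ) (hf : ∀ s ∈ I, 0 ≤ f s)
    (hconv : ∀ a ∈ I, ∀ b ∈ I, ∀ t ∈ Set.Icc (0:ℝ) 1,
        f (t * a + (1 - t) * b) ≤ h t * f a + h (1 - t) * f b)
    (t : Fin n → ℝ) (ht : ∀ j, 0 < t j)
    (x : Fin n → ℝ) (hx : ∀ j, x j ∈ I) :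
    f ((1 / ∑ j, t j) * ∑ j, t j * x j) ≤
      ∑ j, h (t j / ∑ i, t i) * f (x j) := by
  have hfI : HConvexOn h I f := ⟨hI, hconv⟩
  have hsm : SuperMultiplicativeOn h (Icc 0 1) := fun a ha b hb => hsupmul a b ha hb
  have huniv : (univ : Finset (Fin n)).Nontrivial := by
    rw [← one_lt_card_iff_nontrivial, card_univ, Fintype.card_fin]
    omega
  simpa only [centerMass, one_div, smul_eq_mul] using
    hfI.map_centerMass_le hh hsm hf huniv (fun j _ => ht j) (fun j _ => hx j)
end

section
/- Let f be a convex function on [m,M], A₁,…,Aₙ self-adjoint operators with spectra in [m,M], Φ₁,…,Φₙ positive linear maps from B(H) to B(K) with ∑ⱼ Φⱼ(I_H) = I_K. Then f applied via functional calculus satisfies: f(mI_K + MI_K − ∑ⱼ Φⱼ(Aⱼ)) ≤ ((∑ⱼΦⱼ(Aⱼ) − mI_K)/(M−m))·f(m) + ((MI_K − ∑ⱼΦⱼ(Aⱼ))/(M−m))·f(M) ≤ (f(m)+f(M))·I_K − ∑ⱼ Φⱼ(f(Aⱼ)). -/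
/-!
Let `ℓ = chord f m M` be the affine function through `(m, f m)` and `(M, f M)`. Convexity gives
`f ≤ ℓ` on `[m, M]`, hence `f(X) ≤ ℓ(X)` by functional calculus for every `m ≤ X ≤ M`. The unital
positive map `X ↦ ∑ Φⱼ Xⱼ` preserves these bounds and commutes with `ℓ`, so `S = ∑ Φⱼ(Aⱼ)` and its
reflection `m + M - S` both lie between `m` and `M`. The first inequality is the chord bound at
`m + M - S`; the second follows from `ℓ(m + M - S) + ℓ(S) = f(m) + f(M)` and
`∑ Φⱼ(f(Aⱼ)) ≤ ∑ Φⱼ(ℓ(Aⱼ)) = ℓ(S)`.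
-/

open Set

section Chord

variable {R : Type*} [Ring R] [Algebra ℝ R] (f : ℝ → ℝ) (m M : ℝ)

noncomputable def chord (x : R) : R :=
  (M - m)⁻¹ • (f m • (algebraMap ℝ R M - x) + f M • (x - algebraMap ℝ R m))

lemma chord_reflect_add_chord (hmM : m ≠ M) (x : R) :
    chord f m M (algebraMap ℝ R m + algebraMap ℝ R M - x) + chord f m M x =
      (f m + f M) • (1 : R) := by
  have : M - m ≠ 0 := sub_ne_zero.2 hmM.symm
  simp only [chord, Algebra.algebraMap_eq_smul_one]
  match_scalars <;> field_simp <;> ring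

lemma continuous_chord [TopologicalSpace R] [IsTopologicalRing R] [ContinuousSMul ℝ R] :
    Continuous (chord (R := R) f m M) := by
  unfold chord
  fun_prop

end Chord

lemma ConvexOn.le_chord {s : Set ℝ} {f : ℝ → ℝ} {m M : ℝ} (hf : ConvexOn ℝ s f) (hm : m ∈ s)
    (hM : M ∈ s) (hmM : m < M) {t : ℝ} (ht : t ∈ Icc m M) : f t ≤ chord f m M t := by
  have hMm : 0 < M - m := sub_pos.2 hmM
  have hcomb := hf.2 hm hM (div_nonneg (sub_nonneg.2 ht.2) hMm.le)
    (div_nonneg (sub_nonneg.2 ht.1) hMm.le) (by field_simp; ring)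
  have ht' : ((M - t) / (M - m)) • m + ((t - m) / (M - m)) • M = t := by
    simp only [smul_eq_mul]; field_simp; ring
  rw [ht'] at hcomb
  refine hcomb.trans_eq ?_
  simp only [chord, smul_eq_mul, Algebra.algebraMap_self, RingHom.id_apply]
  ring

section PositiveMaps

variable {ι A B : Type*} [Fintype ι] [Ring A] [Algebra ℝ A] [Ring B] [Algebra ℝ B]
  {Φ : ι → A →ₗ[ℝ] B}

lemma sum_map_algebraMap (hΦ : ∑ j, Φ j 1 = 1) (r : ℝ) :
    ∑ j, Φ j (algebraMap ℝ A r) = algebraMap ℝ B r := by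
  simp only [Algebra.algebraMap_eq_smul_one, map_smul, ← Finset.smul_sum, hΦ]

lemma sum_map_chord (hΦ : ∑ j, Φ j 1 = 1) (f : ℝ → ℝ) (m M : ℝ) (x : ι → A) :
    ∑ j, Φ j (chord f m M (x j)) = chord f m M (∑ j, Φ j (x j)) := by
  simp only [chord, map_smul, map_add, map_sub, ← Finset.smul_sum, Finset.sum_add_distrib,
    Finset.sum_sub_distrib, sum_map_algebraMap hΦ]

variable [PartialOrder A] [IsOrderedAddMonoid A] [PartialOrder B] [IsOrderedAddMonoid B]

lemma sum_map_le_sum_map (hpos : ∀ j x, 0 ≤ x → 0 ≤ Φ j x) {x y : ι → A}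
    (hxy : ∀ j, x j ≤ y j) : ∑ j, Φ j (x j) ≤ ∑ j, Φ j (y j) :=
  Finset.sum_le_sum fun j _ => OrderHomClass.mono (PositiveLinearMap.mk₀ _ (hpos j)) (hxy j)

lemma algebraMap_le_sum_map (hpos : ∀ j x, 0 ≤ x → 0 ≤ Φ j x) (hΦ : ∑ j, Φ j 1 = 1) {r : ℝ}
    {x : ι → A} (hx : ∀ j, algebraMap ℝ A r ≤ x j) : algebraMap ℝ B r ≤ ∑ j, Φ j (x j) :=
  sum_map_algebraMap hΦ r ▸ sum_map_le_sum_map hpos hx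

lemma sum_map_le_algebraMap (hpos : ∀ j x, 0 ≤ x → 0 ≤ Φ j x) (hΦ : ∑ j, Φ j 1 = 1) {r : ℝ}
    {x : ι → A} (hx : ∀ j, x j ≤ algebraMap ℝ A r) : ∑ j, Φ j (x j) ≤ algebraMap ℝ B r :=
  sum_map_algebraMap hΦ r ▸ sum_map_le_sum_map hpos hx

end PositiveMaps

section CFC

variable {A : Type*} [TopologicalSpace A] [Ring A] [StarRing A] [Algebra ℝ A]
  [ContinuousFunctionalCalculus ℝ A IsSelfAdjoint]

lemma cfc_chord (f : ℝ → ℝ) (m M : ℝ) (x : A) (hx : IsSelfAdjoint x := by cfc_tac) :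
    cfc (chord (R := ℝ) f m M) x = chord f m M x := by
  change cfc (fun t : ℝ => (M - m)⁻¹ • (f m • (M - t) + f M • (t - m))) x = _
  rw [cfc_smul .., cfc_add .., cfc_smul .., cfc_smul .., cfc_sub .., cfc_sub .., cfc_const M x,
    cfc_const m x, cfc_id' ..]
  rfl

end CFC

section CStarAlgebra

variable {A : Type*} [CStarAlgebra A] [PartialOrder A] [StarOrderedRing A]

lemma cfc_le_chord {f : ℝ → ℝ} {m M : ℝ} (hmM : m < M) (hf : ConvexOn ℝ (Icc m M) f)
    (hfc : ContinuousOn f (Icc m M)) {x : A} (hm : algebraMap ℝ A m ≤ x)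
    (hM : x ≤ algebraMap ℝ A M) : cfc f x ≤ chord f m M x := by
  have hx : IsSelfAdjoint x := (IsSelfAdjoint.algebraMap A (.all m)).of_ge hm
  have hspec : spectrum ℝ x ⊆ Icc m M := fun t ht =>
    ⟨(algebraMap_le_iff_le_spectrum hx).1 hm t ht, (le_algebraMap_iff_spectrum_le hx).1 hM t ht⟩
  rw [← cfc_chord f m M x]
  exact cfc_mono
    (fun t ht => hf.le_chord (left_mem_Icc.2 hmM.le) (right_mem_Icc.2 hmM.le) hmM (hspec ht))
    (hfc.mono hspec) (continuous_chord f m M).continuousOn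

end CStarAlgebra

theorem operator_jensen_mercer_general
    {A B : Type*}
    [CStarAlgebra A] [PartialOrder A] [StarOrderedRing A]
    [CStarAlgebra B] [PartialOrder B] [StarOrderedRing B]
    (m M : ℝ) (hmM : m < M)
    (f : ℝ → ℝ) (hconv : ConvexOn ℝ (Set.Icc m M) f)
    (hfc : ContinuousOn f (Set.Icc m M))
    (n : ℕ) (a : Fin n → A)
    (hlb : ∀ j, algebraMap ℝ A m ≤ a j) (hub : ∀ j, a j ≤ algebraMap ℝ A M)
    (Φ : Fin n → A →ₗ[ℝ] B)
    (hpos : ∀ j, ∀ x : A, 0 ≤ x → 0 ≤ Φ j x)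
    (hnorm : ∑ j, Φ j 1 = 1) :
    cfc f (algebraMap ℝ B m + algebraMap ℝ B M - ∑ j, Φ j (a j)) ≤
      (M - m)⁻¹ • (f m • ((∑ j, Φ j (a j)) - algebraMap ℝ B m) +
        f M • (algebraMap ℝ B M - ∑ j, Φ j (a j))) ∧
    (M - m)⁻¹ • (f m • ((∑ j, Φ j (a j)) - algebraMap ℝ B m) +
        f M • (algebraMap ℝ B M - ∑ j, Φ j (a j))) ≤
      (f m + f M) • (1 : B) - ∑ j, Φ j (cfc f (a j)) := by
  set S := ∑ j, Φ j (a j)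
  have hSm : algebraMap ℝ B m ≤ S := algebraMap_le_sum_map hpos hnorm hlb
  have hSM : S ≤ algebraMap ℝ B M := sum_map_le_algebraMap hpos hnorm hub
  have hchord_reflect : chord f m M (algebraMap ℝ B m + algebraMap ℝ B M - S) =
      (M - m)⁻¹ • (f m • (S - algebraMap ℝ B m) + f M • (algebraMap ℝ B M - S)) := by
    simp only [chord]
    congr 3 <;> abel
  rw [← hchord_reflect]
  constructor
  · refine cfc_le_chord hmM hconv hfc ?_ ?_
    · exact le_sub_iff_add_le.2 (add_le_add_right hSM _)
    · exact sub_le_iff_le_add'.2 (add_le_add_left hSm _)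
  · rw [eq_sub_of_add_eq (chord_reflect_add_chord f m M hmM.ne S)]
    refine sub_le_sub_left ?_ _
    calc ∑ j, Φ j (cfc f (a j)) ≤ ∑ j, Φ j (chord f m M (a j)) :=
          sum_map_le_sum_map hpos fun j => cfc_le_chord hmM hconv hfc (hlb j) (hub j)
      _ = chord f m M S := sum_map_chord hnorm f m M a

theorem operator_jensen_mercer
    {A B : Type*}
    [CStarAlgebra A] [PartialOrder A] [StarOrderedRing A]
    [CStarAlgebra B] [PartialOrder B] [StarOrderedRing B]
    (m M : ℝ) (hmM : m < M)
    (f : ℝ → ℝ) (hconv : ConvexOn ℝ (Set.Icc m M) f)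
    (hfc : ContinuousOn f (Set.Icc m M))
    (n : ℕ) (a : Fin n → A) (hsa : ∀ j, IsSelfAdjoint (a j))
    (hlb : ∀ j, algebraMap ℝ A m ≤ a j) (hub : ∀ j, a j ≤ algebraMap ℝ A M)
    (Φ : Fin n → A →ₗ[ℝ] B)
    (hpos : ∀ j, ∀ x : A, 0 ≤ x → 0 ≤ Φ j x)
    (hnorm : ∑ j, Φ j 1 = 1) :
    cfc f (algebraMap ℝ B m + algebraMap ℝ B M - ∑ j, Φ j (a j)) ≤
      (M - m)⁻¹ • (f m • ((∑ j, Φ j (a j)) - algebraMap ℝ B m) +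
        f M • (algebraMap ℝ B M - ∑ j, Φ j (a j))) ∧
    (M - m)⁻¹ • (f m • ((∑ j, Φ j (a j)) - algebraMap ℝ B m) +
        f M • (algebraMap ℝ B M - ∑ j, Φ j (a j))) ≤
      (f m + f M) • (1 : B) - ∑ j, Φ j (cfc f (a j)) :=
  operator_jensen_mercer_general m M hmM f hconv hfc n a hlb hub Φ hpos hnorm
end
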